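/- Quantitative bounds on the linearized coefficients for semiconvex solutions: let K > 0. There exist Λ(n,K), c(n,K) > 0 and C(n,K) such that for every λ ∈ ℝⁿ with λ₁ ≥ λ₂ ≥ ⋯ ≥ λₙ ≥ −K, σ₂(λ) = 1, σ₁(λ) > 0, and λ₁ ≥ Λ(n,K), one has c(n,K) ≤ λ₁(σ₁ − λ₁) ≤ C(n,K), and for every k ≥ 2, c(n,K) ≤ (σ₁ − λ_k)/λ₁ ≤ C(n,K). -/

import Mathlib

/-!
Write `σ = ∑ λᵢ`. From `σ² = |λ|² + 2 > λᵢ²` and `σ > 0` we get `σ - λᵢ > 0` for every `i`, so all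
terms of `∑ᵢ (λᵢ + K)(σ - λᵢ) = 2 + (n - 1)Kσ` are nonnegative. For `j ≠ 1` we have
`σ - λⱼ ≥ λ₁ - (n - 2)K ≥ λ₁ / 2` and `σ ≤ nλ₁`, so the `j`-th term bounds `λⱼ` by a constant
`M(n, K)` as soon as `λ₁ ≥ n M(n, K)`. Then `s = σ - λ₁` and `t = ∑_{j ≥ 2} λⱼ²` satisfy
`s (2λ₁ + s) = 2 + t` with `s ≤ (n - 1)M ≤ λ₁` and `t ≤ (n - 1)M²`, which gives `s > 0`,
`2/3 ≤ λ₁ s ≤ 1 + t/2`, and `(σ - λₖ)/λ₁ = 1 + (s - λₖ)/λ₁ ∈ [1/2, 2]`.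
-/

open Finset

section SigmaTwo

variable {ι : Type*} [Fintype ι] (l : ι → ℝ) {K : ℝ}

theorem lt_sum_of_sum_sq_lt_sq_sum (hpos : 0 < ∑ i, l i)
    (h : ∑ i, l i ^ 2 < (∑ i, l i) ^ 2) (i : ι) : l i < ∑ j, l j :=
  have hi : l i ^ 2 < (∑ j, l j) ^ 2 :=
    (single_le_sum (fun j _ => sq_nonneg (l j)) (mem_univ i)).trans_lt h
  (le_abs_self _).trans_lt (abs_lt_of_sq_lt_sq hi hpos.le)

theorem sum_add_mul_sum_sub (K : ℝ) :
    ∑ i, (l i + K) * (∑ j, l j - l i) =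
      (∑ i, l i) ^ 2 - ∑ i, l i ^ 2 + K * (Fintype.card ι - 1) * ∑ i, l i := by
  simp only [add_mul, mul_sub, sum_add_distrib, sum_sub_distrib, ← mul_sum, ← sum_mul,
    sum_const, card_univ, nsmul_eq_mul, ← sq]
  ring

theorem add_mul_sum_sub_le (hlow : ∀ i, -K ≤ l i) (hpos : 0 < ∑ i, l i)
    (h : ∑ i, l i ^ 2 < (∑ i, l i) ^ 2) (i : ι) :
    (l i + K) * (∑ j, l j - l i) ≤
      (∑ i, l i) ^ 2 - ∑ i, l i ^ 2 + K * (Fintype.card ι - 1) * ∑ i, l i := by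
  rw [← sum_add_mul_sum_sub]
  refine single_le_sum (f := fun i => (l i + K) * (∑ j, l j - l i)) (fun j _ => ?_)
    (mem_univ i)
  exact mul_nonneg (neg_le_iff_add_nonneg.1 (hlow j))
    (sub_nonneg.2 (lt_sum_of_sum_sq_lt_sq_sum l hpos h j).le)

theorem add_sub_le_sum (hlow : ∀ i, -K ≤ l i) {i j : ι} (hij : i ≠ j) :
    l i + l j - (Fintype.card ι - 2) * K ≤ ∑ k, l k := by
  have h := add_le_sum (f := fun k => l k + K) (fun k _ => neg_le_iff_add_nonneg.1 (hlow k))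
    (mem_univ i) (mem_univ j) hij
  simp only [sum_add_distrib, sum_const, card_univ, nsmul_eq_mul] at h
  linarith

def tailBound (n : ℕ) (K : ℝ) : ℝ := 2 * n ^ 2 * K + 4

theorem add_four_le_tailBound {n : ℕ} (hn : n ≠ 0) (hK : 0 ≤ K) : K + 4 ≤ tailBound n K := by
  have : (1 : ℝ) ≤ n := Nat.one_le_cast.2 (Nat.one_le_iff_ne_zero.2 hn)
  unfold tailBound; nlinarith [mul_le_mul_of_nonneg_right (one_le_pow₀ (n := 2) this) hK]

theorem le_tailBound (hK : 0 ≤ K) (hlow : ∀ i, -K ≤ l i) {i₀ : ι} (htop : ∀ i, l i ≤ l i₀)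
    (hσ : (∑ i, l i) ^ 2 - ∑ i, l i ^ 2 = 2) (hpos : 0 < ∑ i, l i)
    (hΛ : Fintype.card ι * tailBound (Fintype.card ι) K ≤ l i₀) {j : ι} (hj : j ≠ i₀) :
    l j ≤ tailBound (Fintype.card ι) K := by
  have hterm := add_mul_sum_sub_le l hlow hpos (by linarith) j
  have hpair := add_sub_le_sum l hlow hj
  have hM := add_four_le_tailBound (Fintype.card_pos_iff.2 ⟨j⟩).ne' hK
  set N : ℝ := (Fintype.card ι : ℝ)
  set M := tailBound (Fintype.card ι) K with hM_def
  set σ := ∑ i, l i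
  set a := l i₀
  have hN : 1 ≤ N := Nat.one_le_cast.2 (Fintype.card_pos_iff.2 ⟨j⟩)
  have hσ_le : σ ≤ N * a := by simpa using sum_le_card_nsmul univ l a (fun i _ => htop i)
  have ha : 2 * N * K ≤ a := by
    have : 2 * N * K ≤ N * M := by
      rw [hM_def, tailBound]
      nlinarith [mul_le_mul_of_nonneg_left hN (mul_nonneg hK (by linarith : (0 : ℝ) ≤ N))]
    linarith
  have ha1 : 4 ≤ a := by nlinarith
  by_contra! hb
  have hgap : a / 2 ≤ σ - l j := by nlinarith
  have hcompare : (N ^ 2 * K + 2) * a ≤ 2 + N ^ 2 * K * a :=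
    calc (N ^ 2 * K + 2) * a = M * (a / 2) := by rw [hM_def, tailBound]; ring
      _ ≤ (l j + K) * (σ - l j) := by gcongr <;> linarith
      _ ≤ 2 + K * (N - 1) * σ := by linarith
      _ ≤ 2 + K * (N - 1) * (N * a) := by gcongr
      _ ≤ 2 + N ^ 2 * K * a := by
        nlinarith [mul_nonneg (mul_nonneg hK (by linarith : (0 : ℝ) ≤ N)) (by linarith : 0 ≤ a)]
  nlinarith

end SigmaTwo

theorem mul_mem_of_sq_add_sub_eq_two {a s t B : ℝ} (h : (a + s) ^ 2 - (a ^ 2 + t) = 2)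
    (ht0 : 0 ≤ t) (ht : t ≤ B) (ha : 0 < a) (hsa : s ≤ a) (hpos : 0 < a + s) :
    2 / 3 ≤ a * s ∧ a * s ≤ 1 + B / 2 := by
  have hprod : 2 ≤ s * (2 * a + s) := by nlinarith
  have hs : 0 < s := pos_of_mul_pos_left (by linarith) (by linarith : 0 ≤ 2 * a + s)
  constructor <;> nlinarith

theorem linearized_coefficient_bounds_fin_succ {m : ℕ} {K : ℝ} (hK : 0 ≤ K)
    (l : Fin (m + 1) → ℝ)     (hlow : ∀ i, -K ≤ l i) (htop : ∀ i, l i ≤ l 0)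
    (hσ : (∑ i, l i) ^ 2 - ∑ i, l i ^ 2 = 2) (hpos : 0 < ∑ i, l i)
    (hΛ : (m + 1 : ℕ) * tailBound (m + 1) K ≤ l 0) :
    (1 / 2 ≤ l 0 * (∑ i, l i - l 0) ∧
      l 0 * (∑ i, l i - l 0) ≤ (m + 1 : ℕ) * tailBound (m + 1) K ^ 2) ∧
    ∀ k ≠ 0, 1 / 2 ≤ (∑ i, l i - l k) / l 0 ∧
      (∑ i, l i - l k) / l 0 ≤ (m + 1 : ℕ) * tailBound (m + 1) K ^ 2 := by
  have htail : ∀ i : Fin m, l i.succ ≤ tailBound (m + 1) K := fun i => by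
    simpa using le_tailBound l hK hlow htop hσ hpos (by simpa using hΛ) (Fin.succ_ne_zero i)
  have hM := add_four_le_tailBound m.succ_ne_zero hK
  set M := tailBound (m + 1) K
  have hs : ∑ i : Fin m, l i.succ ≤ m * M := by
    simpa using sum_le_card_nsmul univ _ M (fun i _ => htail i)
  have ht : ∑ i : Fin m, l i.succ ^ 2 ≤ m * M ^ 2 := by
    simpa using sum_le_card_nsmul univ _ (M ^ 2)
      (fun i _ => sq_le_sq' (by linarith [hlow i.succ]) (htail i))
  have ht0 : 0 ≤ ∑ i : Fin m, l i.succ ^ 2 := by positivity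
  rw [Fin.sum_univ_succ] at hσ hpos ⊢
  rw [Fin.sum_univ_succ (fun i => l i ^ 2)] at hσ
  push_cast at hΛ ⊢
  set a := l 0
  set s := ∑ i : Fin m, l i.succ
  have ha : 0 < a := by nlinarith
  obtain ⟨hlo, hhi⟩ := mul_mem_of_sq_add_sub_eq_two hσ ht0 ht ha (by nlinarith) hpos
  have hs0 : 0 < s := pos_of_mul_pos_right (by linarith) ha.le
  simp only [add_sub_cancel_left]
  refine ⟨⟨by linarith, by nlinarith⟩, fun k hk => ?_⟩
  obtain ⟨j, rfl⟩ := Fin.exists_succ_eq.2 hk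
  have hm : (1 : ℝ) ≤ m := Nat.one_le_cast.2 j.pos
  have hM2 : 2 ≤ ((m : ℝ) + 1) * M ^ 2 := by nlinarith
  constructor
  · rw [le_div_iff₀ ha]; nlinarith [htail j]
  · rw [div_le_iff₀ ha]; nlinarith [hlow j.succ]

/-- Quantitative bounds on the linearized coefficients for semiconvex lambda with
sigma_2 = 1 and a large top eigenvalue. -/
theorem sigma2_linearized_coefficient_bounds
    (n : ℕ) (hn : 2 ≤ n) (K : ℝ) (hK : 0 < K) :
    ∃ (Λ c C : ℝ), 0 < Λ ∧ 0 < c ∧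
      ∀ l : Fin n → ℝ,
        (∀ i j : Fin n, i ≤ j → l j ≤ l i) →
        -K ≤ l ⟨n - 1, by omega⟩ →
        ((∑ i, l i) ^ 2 - ∑ i, (l i) ^ 2) / 2 = 1 →
        0 < ∑ i, l i →
        Λ ≤ l ⟨0, by omega⟩ →
        (c ≤ l ⟨0, by omega⟩ * ((∑ i, l i) - l ⟨0, by omega⟩) ∧
          l ⟨0, by omega⟩ * ((∑ i, l i) - l ⟨0, by omega⟩) ≤ C) ∧
        ∀ k : Fin n, 1 ≤ (k : ℕ) →
          c ≤ ((∑ i, l i) - l k) / l ⟨0, by omega⟩ ∧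
          ((∑ i, l i) - l k) / l ⟨0, by omega⟩ ≤ C := by
  obtain ⟨m, rfl⟩ : ∃ m, n = m + 1 := ⟨n - 1, by omega⟩
  have hM := add_four_le_tailBound m.succ_ne_zero hK.le
  refine ⟨(m + 1 : ℕ) * tailBound (m + 1) K, 1 / 2, (m + 1 : ℕ) * tailBound (m + 1) K ^ 2,
    mul_pos (by positivity) (by linarith), by norm_num, fun l hmono hbot hσ hpos hΛ => ?_⟩
  have hlow : ∀ i, -K ≤ l i := fun i => hbot.trans (hmono i _ (Fin.le_last i))
  obtain ⟨htop, hrest⟩ := linearized_coefficient_bounds_fin_succ hK.le l hlow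
    (fun i => hmono 0 i (Fin.zero_le i)) (by linarith) hpos hΛ
  exact ⟨htop, fun k hk => hrest k (Fin.pos_iff_ne_zero.1 hk)⟩
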